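/- arXiv:1405.7849 — 7 statements merged into one kernel-verified Lean document; each statement's English description precedes it below -/
import Mathlib

section
/- For every integer k ≥ 0 and every n ≥ 1, the partial function PartialMOD^k_n is computed exactly by a stable quantum ID-OBDD of width 2: there exist 2×2 unitary matrices U(0) and U(1) over ℂ, an initial computational-basis state, and a set Accept ⊆ {1,2} such that, processing the input bits ν_1,…,ν_n in the natural order and applying U(ν_j) at step j, every input ν with #1(ν) ≡ 0 (mod 2^{k+1}) is accepted with probability 1 and every input ν with #1(ν) ≡ 2^k (mod 2^{k+1}) is accepted with probability 0. -/
/-- Number of 1s in a binary string ν ∈ {0,1}^n. -/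
def countOnes {n : ℕ} (ν : Fin n → Bool) : ℕ :=
  (Finset.univ.filter (fun i => ν i = true)).card

/-- Number of 0s in a binary string ν ∈ {0,1}^n. -/
def countZeros {n : ℕ} (ν : Fin n → Bool) : ℕ :=
  (Finset.univ.filter (fun i => ν i = false)).card

/-- Number of 1s among the first `k` bits. -/
def countOnesFirst (k : ℕ) {n : ℕ} (ν : Fin n → Bool) : ℕ :=
  (Finset.univ.filter (fun i : Fin n => (i : ℕ) < k ∧ ν i = true)).card

/-- Number of 0s among the first `k` bits. -/
def countZerosFirst (k : ℕ) {n : ℕ} (ν : Fin n → Bool) : ℕ :=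
  (Finset.univ.filter (fun i : Fin n => (i : ℕ) < k ∧ ν i = false)).card

/-- A deterministic OBDD of width `d` on `n` Boolean variables. -/
structure DOBDD (n d : ℕ) where
  ord : Equiv.Perm (Fin n)
  T : Fin n → Bool → Fin d → Fin d
  start : Fin d
  Accept : Finset (Fin d)

/-- The node reached by a deterministic OBDD after reading all input bits. -/
def DOBDD.run {n d : ℕ} (M : DOBDD n d) (ν : Fin n → Bool) : Fin d :=
  (List.finRange n).foldl (fun v j => M.T j (ν (M.ord j)) v) M.start

def DOBDD.accepts {n d : ℕ} (M : DOBDD n d) (ν : Fin n → Bool) : Prop :=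
  M.run ν ∈ M.Accept

/-- A deterministic OBDD computes a total Boolean function. -/
def DOBDD.computes {n d : ℕ} (M : DOBDD n d) (f : (Fin n → Bool) → Bool) : Prop :=
  ∀ ν, M.accepts ν ↔ f ν = true

/-- A nondeterministic OBDD of width `d` on `n` Boolean variables. -/
structure NOBDD (n d : ℕ) where
  ord : Equiv.Perm (Fin n)
  T : Fin n → Bool → Fin d → Set (Fin d)
  start : Fin d
  Accept : Finset (Fin d)

/-- The set of nodes reachable by a nondeterministic OBDD after reading all input bits. -/
def NOBDD.reach {n d : ℕ} (M : NOBDD n d) (ν : Fin n → Bool) : Set (Fin d) :=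
  (List.finRange n).foldl (fun S j => {w | ∃ v ∈ S, w ∈ M.T j (ν (M.ord j)) v}) {M.start}

def NOBDD.accepts {n d : ℕ} (M : NOBDD n d) (ν : Fin n → Bool) : Prop :=
  ∃ v ∈ M.reach ν, v ∈ M.Accept

/-- A nondeterministic OBDD computes a total Boolean function. -/
def NOBDD.computes {n d : ℕ} (M : NOBDD n d) (f : (Fin n → Bool) → Bool) : Prop :=
  ∀ ν, M.accepts ν ↔ f ν = true

/-- The class of Boolean functions on n variables computed by deterministic
OBDDs of width at most `w`. -/
def OBDDclass (n w : ℕ) : Set ((Fin n → Bool) → Bool) :=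
  {f | ∃ d, d ≤ w ∧ ∃ M : DOBDD n d, M.computes f}

/-- The class of Boolean functions on n variables computed by nondeterministic
OBDDs of width at most `w`. -/
def NOBDDclass (n w : ℕ) : Set ((Fin n → Bool) → Bool) :=
  {f | ∃ d, d ≤ w ∧ ∃ M : NOBDD n d, M.computes f}

/-- Final probability distribution of a stable probabilistic OBDD given by the pair of
left-stochastic matrices `A`, variable order `ord`, and initial node `s`. -/
noncomputable def stableProbRun {n d : ℕ} (A : Bool → Matrix (Fin d) (Fin d) ℝ)
    (ord : Equiv.Perm (Fin n)) (s : Fin d) (ν : Fin n → Bool) : Fin d → ℝ :=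
  (List.finRange n).foldl (fun v j => (A (ν (ord j))).mulVec v)
    (fun i => if i = s then 1 else 0)

/-- Final quantum state of a stable ID quantum OBDD given by the pair of matrices `U`
and the initial computational-basis state `q0`, reading bits in the natural order. -/
noncomputable def quantumRunStable {n d : ℕ} (U : Bool → Matrix (Fin d) (Fin d) ℂ) (q0 : Fin d)
    (ν : Fin n → Bool) : Fin d → ℂ :=
  (List.finRange n).foldl (fun ψ j => (U (ν j)).mulVec ψ)
    (fun i => if i = q0 then 1 else 0)

/-- A quantum OBDD of width `d` on `n` Boolean variables. -/
structure QOBDD (n d : ℕ) where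
  ord : Equiv.Perm (Fin n)
  U : Fin n → Bool → Matrix (Fin d) (Fin d) ℂ
  unitary : ∀ j b, U j b ∈ Matrix.unitaryGroup (Fin d) ℂ
  q0 : Fin d
  Accept : Finset (Fin d)

/-- The final state of a quantum OBDD on input ν. -/
noncomputable def QOBDD.finalState {n d : ℕ} (M : QOBDD n d) (ν : Fin n → Bool) : Fin d → ℂ :=
  (List.finRange n).foldl (fun ψ j => (M.U j (ν (M.ord j))).mulVec ψ)
    (fun i => if i = M.q0 then 1 else 0)

/-- The acceptance probability of a quantum OBDD on input ν. -/
noncomputable def QOBDD.acceptProb {n d : ℕ} (M : QOBDD n d) (ν : Fin n → Bool) : ℝ :=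
  ∑ i ∈ M.Accept, Complex.normSq (M.finalState ν i)

/-- `NotO_n(ν) = 0` iff `#0(ν) = #1(ν)`. -/
def NotO (n : ℕ) (ν : Fin n → Bool) : Bool := !decide (countZeros ν = countOnes ν)

/-- `NotSQUARE_n(ν) = 0` iff `(#0(ν))² = #1(ν)`. -/
def NotSQUARE (n : ℕ) (ν : Fin n → Bool) : Bool := !decide ((countZeros ν) ^ 2 = countOnes ν)

/-- `NotPOWER_n(ν) = 0` iff `2^{#0(ν)} = #1(ν)`. -/
def NotPOWER (n : ℕ) (ν : Fin n → Bool) : Bool := !decide (2 ^ (countZeros ν) = countOnes ν)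

/-- `MOD^k_n(ν) = 1` iff `#1(ν) ≡ 0 (mod k)`. -/
def MODf (n k : ℕ) (ν : Fin n → Bool) : Bool := decide (countOnes ν % k = 0)

/-- `NotO^k_n(ν) = 0` iff `#^k_0(ν) = #^k_1(ν) = k/2`. -/
def NotOk (n k : ℕ) (ν : Fin n → Bool) : Bool :=
  !decide (countZerosFirst k ν = k / 2 ∧ countOnesFirst k ν = k / 2)

/-- The ordered subsequence of value bits `ν_{2i}` (1-indexed, `1 ≤ i ≤ k/2`) whose
marker bit `ν_{2i-1}` equals `b`; `b = false` gives `α(ν)` and `b = true` gives `β(ν)`. -/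
def valueSubseq {n : ℕ} (k : ℕ) (b : Bool) (ν : Fin n → Bool) : List Bool :=
  (List.range (k / 2)).filterMap (fun j =>
    if h : 2 * j + 1 < n then
      if ν ⟨2 * j, by omega⟩ = b then some (ν ⟨2 * j + 1, h⟩) else none
    else none)

/-- `EQS^k_n(ν) = 1` iff `α(ν) = β(ν)`. -/
def EQS (n k : ℕ) (ν : Fin n → Bool) : Bool :=
  decide (valueSubseq k false ν = valueSubseq k true ν)

/-- `NotEQS^k_n(ν) = 1 - EQS^k_n(ν)`. -/
def NotEQS (n k : ℕ) (ν : Fin n → Bool) : Bool := !(EQS n k ν)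

noncomputable def Rmat (θ : ℝ) : Matrix (Fin 2) (Fin 2) ℂ :=
  !![(Real.cos θ : ℂ), -(Real.sin θ : ℂ); (Real.sin θ : ℂ), (Real.cos θ : ℂ)]

noncomputable def vvec (a : ℝ) : Fin 2 → ℂ := ![(Real.cos a : ℂ), (Real.sin a : ℂ)]

lemma Rmat_unitary (θ : ℝ) : Rmat θ ∈ Matrix.unitaryGroup (Fin 2) ℂ := by
  rw [Matrix.mem_unitaryGroup_iff]
  ext i j
  fin_cases i <;> fin_cases j <;>
    simp [Rmat, Matrix.mul_apply, Fin.sum_univ_two, Matrix.one_apply, Matrix.star_apply,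
      ← Complex.ofReal_cos, ← Complex.ofReal_sin, Complex.conj_ofReal] <;>
    norm_cast <;> nlinarith [Real.sin_sq_add_cos_sq θ]

lemma Rmat_mulVec (θ a : ℝ) : (Rmat θ).mulVec (vvec a) = vvec (a + θ) := by
  funext i
  fin_cases i <;>
    simp [Rmat, vvec, Matrix.mulVec, dotProduct, Fin.sum_univ_two, Real.cos_add,
      Real.sin_add] <;> push_cast <;> ring

lemma countOnes_eq_countP {n : ℕ} (ν : Fin n → Bool) :
    countOnes ν = (List.finRange n).countP (fun j => ν j) := by
  simp [countOnes, Finset.card_filter, Fin.univ_def, Finset.filter,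
    List.countP_eq_length_filter]

lemma fold_run {n : ℕ} (ν : Fin n → Bool) (θ : ℝ) :
    ∀ (l : List (Fin n)) (a : ℝ),
      l.foldl (fun ψ j => ((if ν j then Rmat θ else 1).mulVec ψ)) (vvec a)
        = vvec (a + θ * (l.countP (fun j => ν j) : ℕ)) := by
  intro l
  induction l with
  | nil => intro a; simp
  | cons j l ih =>
    intro a
    by_cases h : ν j = true
    · have hc : (j :: l).countP (fun j => ν j) = l.countP (fun j => ν j) + 1 := by
        simp [List.countP_cons, h]
      rw [List.foldl_cons, if_pos h, Rmat_mulVec, ih, hc]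
      congr 1
      push_cast
      ring
    · have hc : (j :: l).countP (fun j => ν j) = l.countP (fun j => ν j) := by
        simp [List.countP_cons, h]
      rw [List.foldl_cons, if_neg h, Matrix.one_mulVec, ih, hc]

/-- For every `k ≥ 0` and `n ≥ 1`, the partial function `PartialMOD^k_n` is computed exactly by
a stable quantum ID-OBDD of width 2: yes-instances (`#1(ν) ≡ 0 (mod 2^{k+1})`) are accepted
with probability 1, no-instances (`#1(ν) ≡ 2^k (mod 2^{k+1})`) with probability 0. -/
theorem partialMOD_exact_quantum_width_two (k n : ℕ) (hn : 1 ≤ n) :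
    ∃ (U : Bool → Matrix (Fin 2) (Fin 2) ℂ) (q0 : Fin 2) (Accept : Finset (Fin 2)),
      (∀ b, U b ∈ Matrix.unitaryGroup (Fin 2) ℂ) ∧
      ∀ ν : Fin n → Bool,
        (countOnes ν % 2 ^ (k + 1) = 0 →
          ∑ i ∈ Accept, Complex.normSq (quantumRunStable U q0 ν i) = 1) ∧
        (countOnes ν % 2 ^ (k + 1) = 2 ^ k →
          ∑ i ∈ Accept, Complex.normSq (quantumRunStable U q0 ν i) = 0) := by
  set θ : ℝ := Real.pi / 2 ^ (k + 1) with hθ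
  refine ⟨fun b => if b then Rmat θ else 1, 0, {0}, ?_, ?_⟩
  · intro b
    cases b
    · simpa using Submonoid.one_mem _
    · simpa using Rmat_unitary θ
  · intro ν
    have hinit : (fun i : Fin 2 => if i = (0 : Fin 2) then (1:ℂ) else 0) = vvec 0 := by
      funext i; fin_cases i <;> simp [vvec]
    have hrun : quantumRunStable (fun b => if b then Rmat θ else 1) 0 ν
        = vvec (θ * (countOnes ν : ℕ)) := by
      rw [quantumRunStable, hinit, fold_run ν θ (List.finRange n) 0,
        countOnes_eq_countP]
      ring_nf
    have hpow : (2:ℝ) ^ (k+1) ≠ 0 := by positivity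
    constructor
    · intro h
      obtain ⟨q, hq⟩ := Nat.dvd_of_mod_eq_zero h
      have harg : θ * (countOnes ν : ℕ) = (q : ℝ) * Real.pi := by
        rw [hq, hθ]; push_cast; field_simp
      rw [hrun, harg]
      simp only [Finset.sum_singleton, vvec, Matrix.cons_val_zero, Complex.normSq_ofReal]
      nlinarith [Real.sin_sq_add_cos_sq ((q:ℝ) * Real.pi), Real.sin_nat_mul_pi q]
    · intro h
      set q := countOnes ν / 2 ^ (k+1) with hqdef
      have hm : countOnes ν = 2 ^ (k+1) * q + 2 ^ k := by
        rw [hqdef, ← h]; exact (Nat.div_add_mod _ _).symm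
      have harg : θ * (countOnes ν : ℕ) = (q : ℝ) * Real.pi + Real.pi / 2 := by
        rw [hm, hθ]; push_cast [pow_succ]; field_simp
      rw [hrun, harg]
      simp only [Finset.sum_singleton, vvec, Matrix.cons_val_zero, Complex.normSq_ofReal]
      rw [Real.cos_add, Real.cos_pi_div_two, Real.sin_pi_div_two, Real.sin_nat_mul_pi]
      ring
end

section
/- For every integer k ≥ 0, there are infinitely many n such that every nondeterministic OBDD on n variables computing the partial function PartialMOD^k_n has width at least 2^{k+1}. -/
/-!
Suppose `M` has width `d < t = 2^(k+1)`. Colour each pair of levels `a < b` by the set of triples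
`(v, v', c)` such that some assignment of the levels in `[a, b)` with `c` ones (mod `t`) leads from
node `v` to node `v'`. By Ramsey's theorem, for `n` large there are `t + 1` levels all of whose
pairs have the same colour `e`; splitting at a middle level shows `e ∘ e ⊆ e`. The input with a one
at exactly the first `t` of these levels has `t ≡ 0` ones, so it is accepted, and since `d < t` its
accepting run visits one node `v` at two of these levels `a < b`, reading `0 < x < t` ones in
between. As `e` is closed under composition, this loop may be replaced by one reading `(j + 1) x`
ones for any `j`, and `j x ≡ 2^k (mod t)` is solvable since `x ≢ 0`: the result is an accepted
input with `≡ 2^k` ones.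
-/

open Finset

section Ramsey

variable {C : Type*} (f : ℕ → ℕ → C)

theorem exists_subset_pair_color_eq_left [Fintype C] (L : ℕ) {s : Finset ℕ}
    (hs : (Fintype.card C + 1) ^ L ≤ #s) :
    ∃ T ⊆ s, #T = L ∧ ∃ col : ℕ → C, ∀ i ∈ T, ∀ j ∈ T, i < j → f i j = col i := by
  induction L generalizing s with
  | zero => exact ⟨∅, empty_subset _, rfl, fun _ => f 0 0, by simp⟩
  | succ L ih =>
    classical
    have : Nonempty C := ⟨f 0 0⟩
    have hs₀ : s.Nonempty := card_pos.mp (lt_of_lt_of_le (by positivity) hs)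
    set v := s.min' hs₀
    have hfiber : #(univ : Finset C) * (Fintype.card C + 1) ^ L ≤ #(s.erase v) := by
      rw [card_univ, card_erase_of_mem (s.min'_mem hs₀)]
      have : 1 ≤ (Fintype.card C + 1) ^ L := Nat.one_le_pow _ _ (by omega)
      have : (Fintype.card C + 1) ^ (L + 1) =
          Fintype.card C * (Fintype.card C + 1) ^ L + (Fintype.card C + 1) ^ L := by ring
      omega
    obtain ⟨κ, -, hκ⟩ := exists_le_card_fiber_of_mul_le_card_of_maps_to
      (fun _ _ => mem_univ (f v _)) univ_nonempty hfiber
    obtain ⟨T, hTs, hT, col, hcol⟩ := ih hκ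
    have hTs' : T ⊆ s.erase v := hTs.trans (filter_subset _ _)
    have hvT : v ∉ T := fun h => by simpa using hTs' h
    refine ⟨insert v T, insert_subset (s.min'_mem hs₀) (hTs'.trans (erase_subset _ _)),
      by rw [card_insert_of_notMem hvT, hT], Function.update col v κ, ?_⟩
    intro i hi j hj hij
    rcases mem_insert.mp hi with rfl | hiT
    · have hjT : j ∈ T := (mem_insert.mp hj).resolve_left hij.ne'
      rw [Function.update_self]
      exact (mem_filter.mp (hTs hjT)).2
    · have hjT : j ∈ T := by
        refine (mem_insert.mp hj).resolve_left ?_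
        rintro rfl
        exact hij.not_ge (s.min'_le i (mem_of_mem_erase (hTs' hiT)))
      rw [Function.update_of_ne (ne_of_mem_of_not_mem hiT hvT)]
      exact hcol i hiT j hjT hij

/-- Ramsey's theorem for pairs, with the bound of the greedy proof. -/
theorem exists_subset_pair_color_eq [Finite C] (m : ℕ) {s : Finset ℕ}
    (hs : (Nat.card C + 1) ^ (Nat.card C * m + 1) ≤ #s) :
    ∃ T ⊆ s, #T = m + 1 ∧ ∃ κ, ∀ i ∈ T, ∀ j ∈ T, i < j → f i j = κ := by
  classical
  have := Fintype.ofFinite C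
  rw [Nat.card_eq_fintype_card] at hs
  obtain ⟨T₀, hT₀s, hT₀, col, hcol⟩ := exists_subset_pair_color_eq_left f _ hs
  obtain ⟨κ, -, hκ⟩ := exists_lt_card_fiber_of_mul_lt_card_of_maps_to (s := T₀) (n := m)
    (fun _ _ => mem_univ (col _)) (by rw [card_univ, hT₀]; omega)
  obtain ⟨T, hT, hTcard⟩ := exists_subset_card_eq hκ
  have hTT₀ : T ⊆ T₀ := hT.trans (filter_subset _ _)
  refine ⟨T, hTT₀.trans hT₀s, hTcard, κ, fun i hi j hj hij => ?_⟩
  rw [hcol i (hTT₀ hi) j (hTT₀ hj) hij]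
  exact (mem_filter.mp (hT hi)).2

end Ramsey

theorem mem_foldl_iff_exists_run {α σ : Type*} (δ : α → σ → Set σ) (l : List α) (S : Set σ)
    (y : σ) :
    y ∈ l.foldl (fun S a => {y | ∃ x ∈ S, y ∈ δ a x}) S ↔
      ∃ r : ℕ → σ, r 0 ∈ S ∧ (∀ i (hi : i < l.length), r (i + 1) ∈ δ l[i] (r i)) ∧
        r l.length = y := by
  induction l generalizing S with
  | nil => exact ⟨fun h => ⟨fun _ => y, h, nofun, rfl⟩, fun ⟨r, h0, _, hr⟩ => hr ▸ h0⟩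
  | cons a l ih =>
    rw [List.foldl_cons, ih]
    constructor
    · rintro ⟨r, ⟨x, hx, hr0⟩, hr, rfl⟩
      refine ⟨fun | 0 => x | i + 1 => r i, hx, ?_, rfl⟩
      rintro (_ | i) hi
      · exact hr0
      · exact hr i (by simpa using hi)
    · rintro ⟨r, hr0, hr, rfl⟩
      exact ⟨fun i => r (i + 1), ⟨r 0, hr0, hr 0 (by simp)⟩,
        fun i hi => hr (i + 1) (by simpa using hi), rfl⟩

def countOnesIco (w : ℕ → Bool) (a b : ℕ) : ℕ :=
  ∑ j ∈ Ico a b, if w j then 1 else 0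

theorem countOnesIco_add (w : ℕ → Bool) {a b c : ℕ} (hab : a ≤ b) (hbc : b ≤ c) :
    countOnesIco w a b + countOnesIco w b c = countOnesIco w a c :=
  sum_Ico_consecutive _ hab hbc

theorem countOnesIco_decide_mem (S : Finset ℕ) (a b : ℕ) :
    countOnesIco (fun j => decide (j ∈ S)) a b = #{i ∈ S | a ≤ i ∧ i < b} := by
  simp only [countOnesIco, decide_eq_true_eq, sum_boole, Nat.cast_id]
  congr 1
  ext i
  simp [and_comm]

theorem countOnes_comp_symm {n : ℕ} (σ : Equiv.Perm (Fin n)) (w : ℕ → Bool) :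
    countOnes (fun i => w (σ.symm i)) = countOnesIco w 0 n := by
  unfold countOnes countOnesIco
  rw [card_filter, ← Equiv.sum_comp σ, Nat.Ico_zero_eq_range, ← Fin.sum_univ_eq_sum_range]
  simp only [Equiv.symm_apply_apply]

theorem exists_nsmul_eq_two_pow {k : ℕ} {x : ZMod (2 ^ (k + 1))} (hx : x ≠ 0) :
    ∃ j : ℕ, j • x = 2 ^ k := by
  have hval : x.val ≠ 0 := (ZMod.val_ne_zero x).mpr hx
  obtain ⟨v, u, hu, hxu⟩ := Nat.exists_eq_two_pow_mul_odd hval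
  have hvk : v ≤ k := by
    by_contra! hkv
    apply hx
    rw [← ZMod.natCast_zmod_val x, ZMod.natCast_eq_zero_iff, hxu]
    exact Dvd.dvd.mul_right (Nat.pow_dvd_pow 2 hkv) u
  obtain ⟨l, rfl⟩ := hu
  refine ⟨2 ^ (k - v), ?_⟩
  have key : 2 ^ (k - v) * (2 ^ v * (2 * l + 1)) = 2 ^ (k + 1) * l + 2 ^ k := by
    rw [← mul_assoc, ← pow_add, Nat.sub_add_cancel hvk]
    ring
  have h2 : (2 : ZMod (2 ^ (k + 1))) ^ (k + 1) = 0 := by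
    exact_mod_cast ZMod.natCast_self (2 ^ (k + 1))
  rw [← ZMod.natCast_zmod_val x, hxu, nsmul_eq_mul, ← Nat.cast_mul, key]
  push_cast
  rw [h2, zero_mul, zero_add]

namespace NOBDD

variable {n d : ℕ} (M : NOBDD n d)

/-- Levels are numbered in reading order: level `j` reads the bit `w j` of the variable `M.ord j`,
and `r j` is the node before level `j`. -/
def IsRun (w : ℕ → Bool) (r : ℕ → Fin d) (a b : ℕ) : Prop :=
  ∀ (j : ℕ) (hj : j < n), a ≤ j → j < b → r (j + 1) ∈ M.T ⟨j, hj⟩ (w j) (r j)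

variable {M} in
theorem IsRun.mono {w : ℕ → Bool} {r : ℕ → Fin d} {a b a' b' : ℕ} (h : M.IsRun w r a b)
    (ha : a ≤ a') (hb : b' ≤ b) : M.IsRun w r a' b' :=
  fun j hj haj hjb => h j hj (ha.trans haj) (hjb.trans_le hb)

theorem accepts_iff_exists_run (w : ℕ → Bool) :
    M.accepts (fun i => w (M.ord.symm i)) ↔
      ∃ r, M.IsRun w r 0 n ∧ r 0 = M.start ∧ r n ∈ M.Accept := by
  simp only [accepts, reach, Equiv.symm_apply_apply]
  simp only [mem_foldl_iff_exists_run (fun j v => M.T j (w j) v), List.length_finRange,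
    List.getElem_finRange, Set.mem_singleton_iff]
  constructor
  · rintro ⟨_, ⟨r, hr0, hr, rfl⟩, hacc⟩
    exact ⟨r, fun j hj _ _ => hr j hj, hr0, hacc⟩
  · rintro ⟨r, hr, hr0, hacc⟩
    exact ⟨r n, ⟨r, hr0, fun j hj => hr j hj (Nat.zero_le j) hj, rfl⟩, hacc⟩

def segRel (t a b : ℕ) : Set (Fin d × Fin d × ZMod t) :=
  {e | ∃ w r, M.IsRun w r a b ∧ r a = e.1 ∧ r b = e.2.1 ∧ (countOnesIco w a b : ZMod t) = e.2.2}

theorem mem_segRel_trans {t a b c : ℕ} (hab : a ≤ b) (hbc : b ≤ c) {u v v' : Fin d}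
    {x y : ZMod t} (h₁ : (u, v, x) ∈ M.segRel t a b) (h₂ : (v, v', y) ∈ M.segRel t b c) :
    (u, v', x + y) ∈ M.segRel t a c := by
  obtain ⟨w₁, r₁, hr₁, rfl, hv₁, rfl⟩ := h₁
  obtain ⟨w₂, r₂, hr₂, hv₂, rfl, rfl⟩ := h₂
  refine ⟨fun j => if j < b then w₁ j else w₂ j, fun j => if j < b then r₁ j else r₂ j,
    fun j hj haj hjc => ?_, ?_, ?_, ?_⟩
  · by_cases hjb : j < b
    · have hr : (if j + 1 < b then r₁ (j + 1) else r₂ (j + 1)) = r₁ (j + 1) := by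
        split_ifs with h
        · rfl
        · rw [show j + 1 = b by omega, hv₁, hv₂]
      simpa only [hjb, if_true, hr] using hr₁ j hj haj hjb
    · simpa only [hjb, if_false, show ¬ j + 1 < b by omega] using hr₂ j hj (by omega) hjc
  · rcases hab.lt_or_eq with hab | rfl
    · simp [hab]
    · simp [hv₁, hv₂]
  · simp [hbc.not_gt]
  · rw [← countOnesIco_add _ hab hbc, Nat.cast_add]
    congr 2
    · exact sum_congr rfl fun j hj => by simp [(mem_Ico.mp hj).2]
    · exact sum_congr rfl fun j hj => by simp [(mem_Ico.mp hj).1.not_gt]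

theorem nsmul_loop_mem_of_segRel_eq {t a b c : ℕ} (hab : a ≤ b) (hbc : b ≤ c)
    {e : Set (Fin d × Fin d × ZMod t)} (h₁ : M.segRel t a b = e) (h₂ : M.segRel t b c = e)
    (h₃ : M.segRel t a c = e) {v : Fin d} {x : ZMod t} (hx : (v, v, x) ∈ e) (j : ℕ) :
    (v, v, (j + 1) • x) ∈ e := by
  induction j with
  | zero => simpa using hx
  | succ j ih =>
    rw [succ_nsmul, ← h₃]
    exact M.mem_segRel_trans hab hbc (h₁ ▸ ih) (h₂ ▸ hx)

def ComputesPartialMOD (k : ℕ) : Prop :=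
  ∀ ν : Fin n → Bool,
    (countOnes ν % 2 ^ (k + 1) = 0 → M.accepts ν) ∧
    (countOnes ν % 2 ^ (k + 1) = 2 ^ k → ¬ M.accepts ν)

variable {M} {k : ℕ}

theorem ComputesPartialMOD.exists_run (hM : M.ComputesPartialMOD k) {w : ℕ → Bool}
    (hw : (countOnesIco w 0 n : ZMod (2 ^ (k + 1))) = 0) :
    ∃ r, M.IsRun w r 0 n ∧ r 0 = M.start ∧ r n ∈ M.Accept := by
  refine (M.accepts_iff_exists_run w).mp ((hM _).1 ?_)
  rwa [countOnes_comp_symm, ← Nat.dvd_iff_mod_eq_zero, ← ZMod.natCast_eq_zero_iff]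

theorem ComputesPartialMOD.not_mem_segRel (hM : M.ComputesPartialMOD k) {f : Fin d}
    (hf : f ∈ M.Accept) : (M.start, f, 2 ^ k) ∉ M.segRel (2 ^ (k + 1)) 0 n := by
  rintro ⟨w, r, hr, hr0, hrn, hw⟩
  refine (hM _).2 ?_ ((M.accepts_iff_exists_run w).mpr ⟨r, hr, hr0, hrn ▸ hf⟩)
  rw [countOnes_comp_symm, ← Nat.mod_eq_of_lt (Nat.pow_lt_pow_right one_lt_two k.lt_succ_self),
    ← ZMod.natCast_eq_natCast_iff', hw, Nat.cast_pow, Nat.cast_ofNat]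

theorem ComputesPartialMOD.exists_loop (hM : M.ComputesPartialMOD k) (hd : d < 2 ^ (k + 1))
    {S : Finset ℕ} (hS : #S = 2 ^ (k + 1)) (hSn : ∀ i ∈ S, i < n) :
    ∃ a ∈ S, ∃ b ∈ S, a < b ∧ ∃ (v f : Fin d) (c x c' : ZMod (2 ^ (k + 1))), f ∈ M.Accept ∧
      (M.start, v, c) ∈ M.segRel _ 0 a ∧ (v, v, x) ∈ M.segRel _ a b ∧
      (v, f, c') ∈ M.segRel _ b n ∧ c + x + c' = 0 ∧ x ≠ 0 := by
  set t := 2 ^ (k + 1)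
  set W : ℕ → Bool := fun j => decide (j ∈ S)
  have hW (a b : ℕ) : countOnesIco W a b = #{i ∈ S | a ≤ i ∧ i < b} :=
    countOnesIco_decide_mem S a b
  have hWn : countOnesIco W 0 n = t := by
    rw [hW, ← hS]
    exact congrArg card (filter_true_of_mem fun i hi => ⟨Nat.zero_le i, hSn i hi⟩)
  obtain ⟨r, hr, hr0, hrn⟩ := hM.exists_run (w := W) (by rw [hWn]; exact ZMod.natCast_self t)
  obtain ⟨a, ha, b, hb, hab, hrab⟩ : ∃ a ∈ S, ∃ b ∈ S, a < b ∧ r a = r b := by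
    obtain ⟨a, ha, b, hb, hne, heq⟩ := exists_ne_map_eq_of_card_lt_of_maps_to
      (t := (univ : Finset (Fin d))) (by rw [card_univ, Fintype.card_fin, hS]; exact hd)
      (fun i _ => mem_univ (r i))
    rcases hne.lt_or_gt with h | h
    · exact ⟨a, ha, b, hb, h, heq⟩
    · exact ⟨b, hb, a, ha, h, heq.symm⟩
  have hbn := hSn b hb
  refine ⟨a, ha, b, hb, hab, r a, r n, _, _, _, hrn,
    ⟨W, r, hr.mono le_rfl (by omega), hr0, rfl, rfl⟩,
    ⟨W, r, hr.mono (Nat.zero_le a) hbn.le, rfl, hrab.symm, rfl⟩,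
    ⟨W, r, hr.mono (Nat.zero_le b) le_rfl, hrab.symm, rfl, rfl⟩, ?_, ?_⟩
  · rw [← Nat.cast_add, ← Nat.cast_add, countOnesIco_add _ (Nat.zero_le a) hab.le,
      countOnesIco_add _ (Nat.zero_le b) hbn.le, hWn]
    exact ZMod.natCast_self t
  · -- the ones of `W` in `[a, b)` sit at the points of `S` there: `a` is one, `b` is not
    have hpos : 0 < countOnesIco W a b := by
      rw [hW]
      exact card_pos.mpr ⟨a, mem_filter.mpr ⟨ha, le_rfl, hab⟩⟩
    have hlt : countOnesIco W a b < t := by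
      rw [hW, ← hS]
      refine card_lt_card ⟨filter_subset _ _, fun h => ?_⟩
      exact (lt_irrefl b) (mem_filter.mp (h hb)).2.2
    rw [Ne, ZMod.natCast_eq_zero_iff]
    exact fun h => hpos.ne' (Nat.eq_zero_of_dvd_of_lt h hlt)

theorem not_computesPartialMOD_of_pumpable_loop {a b : ℕ} (hab : a ≤ b) (hbn : b ≤ n)
    {v f : Fin d} (hf : f ∈ M.Accept) {c x c' : ZMod (2 ^ (k + 1))}
    (hpre : (M.start, v, c) ∈ M.segRel _ 0 a) (hsuf : (v, f, c') ∈ M.segRel _ b n)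
    (hsum : c + x + c' = 0) (hx : x ≠ 0)
    (hpump : ∀ j : ℕ, (v, v, (j + 1) • x) ∈ M.segRel _ a b) :
    ¬ M.ComputesPartialMOD k := by
  intro hM
  obtain ⟨j, hj⟩ := exists_nsmul_eq_two_pow hx
  have hall := M.mem_segRel_trans (Nat.zero_le b) hbn
    (M.mem_segRel_trans (Nat.zero_le a) hab hpre (hpump j)) hsuf
  rw [succ_nsmul, hj, show c + (2 ^ k + x) + c' = 2 ^ k by linear_combination hsum] at hall
  exact hM.not_mem_segRel hf hall

theorem not_computesPartialMOD_of_monochromatic (hd : d < 2 ^ (k + 1)) {T : Finset ℕ}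
    (hT : #T = 2 ^ (k + 1) + 1) (hTn : ∀ i ∈ T, i ≤ n)
    {κ : Set (Fin d × Fin d × ZMod (2 ^ (k + 1)))}
    (hκ : ∀ i ∈ T, ∀ j ∈ T, i < j → M.segRel _ i j = κ) :
    ¬ M.ComputesPartialMOD k := by
  intro hM
  have hT₀ : T.Nonempty := card_pos.mp (by omega)
  set μ := T.max' hT₀
  have hμ : μ ∈ T := T.max'_mem hT₀
  have hSμ : ∀ i ∈ T.erase μ, i < μ := fun i hi => T.lt_max'_of_mem_erase_max' hT₀ hi
  obtain ⟨a, ha, b, hb, hab, v, f, c, x, c', hf, hpre, hloop, hsuf, hsum, hx⟩ :=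
    hM.exists_loop hd (by rw [card_erase_of_mem hμ, hT]; rfl)
      (fun i hi => (hSμ i hi).trans_le (hTn μ hμ))
  have hκ' (i j : ℕ) (hi : i ∈ T.erase μ) (hj : j ∈ T) (hij : i < j) :=
    hκ i (mem_of_mem_erase hi) j hj hij
  have hbμ := hSμ b hb
  have hκab := hκ' a b ha (mem_of_mem_erase hb) hab
  refine not_computesPartialMOD_of_pumpable_loop hab.le (hbμ.le.trans (hTn μ hμ)) hf hpre hsuf
    hsum hx (fun j => hκab ▸ ?_) hM
  exact M.nsmul_loop_mem_of_segRel_eq hab.le hbμ.le hκab (hκ' b μ hb hμ hbμ)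
    (hκ' a μ ha hμ (hSμ a ha)) (hκab ▸ hloop) j

end NOBDD

/-- For every `k ≥ 0`, there are infinitely many `n` such that any nondeterministic OBDD
computing the partial function `PartialMOD^k_n` has width at least `2^{k+1}`. -/
theorem partialMOD_nondeterministic_lower_bound (k : ℕ) :
    ∀ N : ℕ, ∃ n, N ≤ n ∧
      ∀ (d : ℕ) (M : NOBDD n d),
        (∀ ν : Fin n → Bool,
          (countOnes ν % 2 ^ (k + 1) = 0 → M.accepts ν) ∧
          (countOnes ν % 2 ^ (k + 1) = 2 ^ k → ¬ M.accepts ν)) →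
        2 ^ (k + 1) ≤ d := by
  intro N
  set t := 2 ^ (k + 1)
  set q := 2 ^ (t * t * t)
  refine ⟨N + (q + 1) ^ (q * t + 1), Nat.le_add_right _ _, fun d M hM => ?_⟩
  by_contra! hd
  have hcard : Nat.card (Set (Fin d × Fin d × ZMod t)) ≤ q := by
    classical
    rw [Nat.card_eq_fintype_card, Fintype.card_set, Fintype.card_prod, Fintype.card_prod,
      Fintype.card_fin, ZMod.card]
    exact Nat.pow_le_pow_right two_pos
      (by rw [mul_assoc]; exact Nat.mul_le_mul hd.le (Nat.mul_le_mul hd.le le_rfl))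
  obtain ⟨T, hTs, hT, κ, hκ⟩ := exists_subset_pair_color_eq (M.segRel t) t
    (s := range (N + (q + 1) ^ (q * t + 1))) (by
      rw [card_range]
      calc _ ≤ (q + 1) ^ (q * t + 1) := by gcongr; omega
        _ ≤ _ := Nat.le_add_left _ _)
  exact M.not_computesPartialMOD_of_monochromatic hd hT
    (fun i hi => (mem_range.mp (hTs hi)).le) hκ hM
end

section
/- There exist constants d₁, d₂, d₃ such that for every n ≥ 1: the Boolean function NotO_n is computed by a nondeterministic quantum OBDD of width d₁, NotSQUARE_n is computed by a nondeterministic quantum OBDD of width d₂, and NotPOWER_n is computed by a nondeterministic quantum OBDD of width d₃. -/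
/-!
Rotate a qubit, starting in `|0⟩` and accepting in `|1⟩`, by the angle `π√2` per zero read and
by `-π√2 · c / n` per level. After all `n` levels it has turned by `π√2 (#0(ν) - c)`; as `√2` is
irrational this is a multiple of `π`, i.e. the acceptance probability vanishes, only when
`#0(ν) = c`. Each of the three functions is `0` exactly when `g(#0(ν)) = n - #0(ν)` for a
strictly monotone `g` (identity, squaring, `2^·`), an equation with at most one solution `c`.
-/

open Real

noncomputable def rotationMatrix (x : ℝ) : Matrix (Fin 2) (Fin 2) ℂ :=
  !![cos x, -sin x; sin x, cos x]

lemma rotationMatrix_mem_unitaryGroup (x : ℝ) :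
    rotationMatrix x ∈ Matrix.unitaryGroup (Fin 2) ℂ := by
  rw [Matrix.mem_unitaryGroup_iff]
  ext i j
  fin_cases i <;> fin_cases j <;>
    simp [rotationMatrix, Matrix.mul_apply, Fin.sum_univ_two, ← Complex.cos_conj,
      ← Complex.sin_conj, ← sq, Complex.cos_sq_add_sin_sq, Complex.sin_sq_add_cos_sq, mul_comm]

lemma rotationMatrix_zero : rotationMatrix 0 = 1 := by
  ext i j
  fin_cases i <;> fin_cases j <;> simp [rotationMatrix]

lemma rotationMatrix_mul (x y : ℝ) :
    rotationMatrix x * rotationMatrix y = rotationMatrix (x + y) := by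
  ext i j
  fin_cases i <;> fin_cases j <;>
    simp [rotationMatrix, Matrix.mul_apply, Fin.sum_univ_two, cos_add, sin_add] <;> ring

lemma foldl_mulVec_rotationMatrix {ι : Type*} (a : ι → ℝ) (L : List ι) (v : Fin 2 → ℂ) :
    L.foldl (fun ψ j => (rotationMatrix (a j)).mulVec ψ) v =
      (rotationMatrix (L.map a).sum).mulVec v := by
  induction L generalizing v with
  | nil => simp [rotationMatrix_zero]
  | cons j L ih =>
    rw [List.foldl_cons, ih, Matrix.mulVec_mulVec, rotationMatrix_mul, List.map_cons,
      List.sum_cons, add_comm]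

noncomputable def QOBDD.ofRotations (n : ℕ) (a : Bool → ℝ) : QOBDD n 2 where
  ord := 1
  U _ b := rotationMatrix (a b)
  unitary _ _ := rotationMatrix_mem_unitaryGroup _
  q0 := 0
  Accept := {1}

lemma QOBDD.ofRotations_acceptProb {n : ℕ} (a : Bool → ℝ) (ν : Fin n → Bool) :
    (QOBDD.ofRotations n a).acceptProb ν = sin (∑ j, a (ν j)) ^ 2 := by
  have hstate : (QOBDD.ofRotations n a).finalState ν =
      (rotationMatrix (∑ j, a (ν j))).mulVec (Pi.single 0 1) := by
    simp only [QOBDD.finalState, QOBDD.ofRotations, Equiv.Perm.coe_one, id]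
    rw [foldl_mulVec_rotationMatrix (fun j => a (ν j)), Fin.sum_univ_def]
    rfl
  rw [QOBDD.acceptProb, hstate]
  simp [QOBDD.ofRotations, rotationMatrix, -Complex.ofReal_sin, sq]

lemma Irrational.sin_pi_mul_ne_zero {x : ℝ} (hx : Irrational x) : sin (π * x) ≠ 0 := by
  rw [sin_ne_zero_iff]
  intro k hk
  exact hx.ne_int k (mul_left_cancel₀ pi_ne_zero (by rw [← hk, mul_comm])).symm

noncomputable def zeroCountMachine (n c : ℕ) : QOBDD n 2 :=
  QOBDD.ofRotations n fun b => π * √2 * ((if b = false then 1 else 0) - c / n)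

lemma zeroCountMachine_acceptProb {n : ℕ} (hn : n ≠ 0) (c : ℕ) (ν : Fin n → Bool) :
    (zeroCountMachine n c).acceptProb ν = sin (π * ((countZeros ν - c : ℤ) * √2)) ^ 2 := by
  rw [zeroCountMachine, QOBDD.ofRotations_acceptProb, ← Finset.mul_sum, Finset.sum_sub_distrib,
    Finset.sum_boole, Finset.sum_const, Finset.card_univ, Fintype.card_fin, nsmul_eq_mul,
    mul_div_cancel₀ _ (Nat.cast_ne_zero.mpr hn)]
  push_cast [countZeros]
  ring_nf

lemma zeroCountMachine_acceptProb_pos_iff {n : ℕ} (hn : n ≠ 0) (c : ℕ) (ν : Fin n → Bool) :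
    0 < (zeroCountMachine n c).acceptProb ν ↔ countZeros ν ≠ c := by
  rw [zeroCountMachine_acceptProb hn, sq_pos_iff, ne_eq, ne_eq, not_iff_not]
  constructor
  · intro hsin
    by_contra hne
    have hq : (countZeros ν - c : ℤ) ≠ 0 := sub_ne_zero.mpr (by exact_mod_cast hne)
    exact (irrational_sqrt_two.intCast_mul hq).sin_pi_mul_ne_zero hsin
  · intro h
    simp [h]

lemma countZeros_add_countOnes {n : ℕ} (ν : Fin n → Bool) :
    countZeros ν + countOnes ν = n := by
  simp_rw [countZeros, countOnes, ← Bool.not_eq_false]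
  rw [Finset.card_filter_add_card_filter_not, Finset.card_univ, Fintype.card_fin]

lemma countZeros_le {n : ℕ} (ν : Fin n → Bool) : countZeros ν ≤ n :=
  (countZeros_add_countOnes ν).le.trans' (Nat.le_add_right _ _)

lemma exists_qobdd_acceptProb_pos_iff_not {n : ℕ} (hn : n ≠ 0) {P : ℕ → Prop}
    (hP : {z | P z}.Subsingleton) :
    ∃ M : QOBDD n 2, ∀ ν, 0 < M.acceptProb ν ↔ ¬ P (countZeros ν) := by
  by_cases hsol : ∃ c, P c
  · obtain ⟨c, hc⟩ := hsol
    refine ⟨zeroCountMachine n c, fun ν => ?_⟩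
    rw [zeroCountMachine_acceptProb_pos_iff hn]
    exact not_congr ⟨fun h => h ▸ hc, fun h => hP h hc⟩
  · refine ⟨zeroCountMachine n (n + 1), fun ν => ?_⟩
    rw [zeroCountMachine_acceptProb_pos_iff hn]
    exact iff_of_true (by have := countZeros_le ν; omega) fun h => hsol ⟨_, h⟩

lemma StrictMono.setOf_eq_tsub_subsingleton {g : ℕ → ℕ} (hg : StrictMono g) (n : ℕ) :
    {z | g z = n - z}.Subsingleton := by
  intro z (hz : g z = n - z) w (hw : g w = n - w)
  by_contra hne
  rcases Nat.lt_or_gt_of_ne hne with h | h <;> have := hg h <;> omega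

lemma exists_qobdd_acceptProb_pos_iff_ne_countOnes {n : ℕ} (hn : n ≠ 0) {g : ℕ → ℕ}
    (hg : StrictMono g) :
    ∃ M : QOBDD n 2, ∀ ν, 0 < M.acceptProb ν ↔ g (countZeros ν) ≠ countOnes ν := by
  obtain ⟨M, hM⟩ := exists_qobdd_acceptProb_pos_iff_not hn (hg.setOf_eq_tsub_subsingleton n)
  refine ⟨M, fun ν => ?_⟩
  have hsum := countZeros_add_countOnes ν
  rw [hM, show n - countZeros ν = countOnes ν by omega]

/-- There exist constants `d₁, d₂, d₃` such that for every `n ≥ 1`, the Boolean functions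
`NotO_n`, `NotSQUARE_n` and `NotPOWER_n` are computed by nondeterministic quantum OBDDs
of widths `d₁`, `d₂`, `d₃` respectively (acceptance probability positive iff value 1). -/
theorem notO_notSQUARE_notPOWER_nondeterministic_quantum_constant_width :
    ∃ d₁ d₂ d₃ : ℕ, ∀ n : ℕ, 1 ≤ n →
      (∃ M : QOBDD n d₁, ∀ ν : Fin n → Bool, 0 < M.acceptProb ν ↔ NotO n ν = true) ∧
      (∃ M : QOBDD n d₂, ∀ ν : Fin n → Bool, 0 < M.acceptProb ν ↔ NotSQUARE n ν = true) ∧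
      (∃ M : QOBDD n d₃, ∀ ν : Fin n → Bool, 0 < M.acceptProb ν ↔ NotPOWER n ν = true) := by
  refine ⟨2, 2, 2, fun n hn => ?_⟩
  simp only [NotO, NotSQUARE, NotPOWER, Bool.not_eq_true', decide_eq_false_iff_not, ← ne_eq]
  exact ⟨exists_qobdd_acceptProb_pos_iff_ne_countOnes (by omega) strictMono_id,
    exists_qobdd_acceptProb_pos_iff_ne_countOnes (by omega) (Nat.pow_left_strictMono two_ne_zero),
    exists_qobdd_acceptProb_pos_iff_ne_countOnes (by omega) (pow_right_strictMono₀ one_lt_two)⟩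
end

section
/- There are infinitely many n (in particular, all even n) such that every nondeterministic OBDD computing the Boolean function NotO_n has width at least ⌊log₂ n⌋ − 1. -/
/-!
After the first `m = n / 2` levels, the set of nodes reachable on an input must determine the
number `a ≤ m` of ones read so far: that set, together with the remaining bits, determines
acceptance, and completing the prefix with `m - b` ones gives an input with `NotO = 1` iff
`a ≠ b`. So the `m + 1` possible counts reach pairwise distinct subsets of the `d` nodes, whence
`m + 1 ≤ 2 ^ d` and `log₂ n ≤ d`.
-/

lemma List.lt_of_mem_take_finRange {n m : ℕ} {j : Fin n} (h : j ∈ (List.finRange n).take m) :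
    (j : ℕ) < m := by
  obtain ⟨i, hi, rfl⟩ := List.mem_take_iff_getElem.mp h
  simp only [List.getElem_finRange, Fin.val_cast]
  omega

lemma List.le_of_mem_drop_finRange {n m : ℕ} {j : Fin n} (h : j ∈ (List.finRange n).drop m) :
    m ≤ (j : ℕ) := by
  obtain ⟨i, _, rfl⟩ := List.mem_drop_iff_getElem.mp h
  simp

lemma countOnes_add_countZeros {n : ℕ} (ν : Fin n → Bool) : countOnes ν + countZeros ν = n := by
  simpa [countOnes, countZeros] using
    Finset.card_filter_add_card_filter_not (s := Finset.univ) (fun i => ν i = true)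

lemma countOnes_comp_perm {n : ℕ} (ν : Fin n → Bool) (σ : Equiv.Perm (Fin n)) :
    countOnes (ν ∘ σ) = countOnes ν :=
  Finset.card_equiv σ (by simp)

lemma notO_eq_true_iff {n : ℕ} (ν : Fin n → Bool) : NotO n ν = true ↔ 2 * countOnes ν ≠ n := by
  have := countOnes_add_countZeros ν
  simp only [NotO, Bool.not_eq_true', decide_eq_false_iff_not]
  omega

def blockWord (n m a c : ℕ) : Fin n → Bool :=
  fun j => decide ((j : ℕ) < a ∨ m ≤ j ∧ j < m + c)

lemma countOnes_blockWord {n m a c : ℕ} (ha : a ≤ m) (hc : m + c ≤ n) :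
    countOnes (blockWord n m a c) = a + c := by
  have hblocks : (Finset.univ.filter fun j => blockWord n m a c j = true).map Fin.valEmbedding =
      Finset.range a ∪ Finset.Ico m (m + c) := by
    ext x
    simp only [Finset.mem_map, Finset.mem_filter, Finset.mem_univ, true_and, blockWord,
      decide_eq_true_eq, Fin.valEmbedding_apply, Finset.mem_union, Finset.mem_range, Finset.mem_Ico]
    exact ⟨fun ⟨j, hj, hjx⟩ => hjx ▸ hj, fun hx => ⟨⟨x, by omega⟩, hx, rfl⟩⟩
  rw [countOnes, ← Finset.card_map, hblocks, Finset.card_union_of_disjoint, Finset.card_range,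
    Nat.card_Ico, Nat.add_sub_cancel_left]
  exact Finset.disjoint_left.mpr fun x hx hx' => by simp only [Finset.mem_range, Finset.mem_Ico] at hx hx'; omega

lemma blockWord_of_lt {n m a c : ℕ} {j : Fin n} (hj : (j : ℕ) < m) :
    blockWord n m a c j = decide ((j : ℕ) < a) := by
  simp only [blockWord, decide_eq_decide]
  omega

lemma blockWord_of_ge {n m a c : ℕ} {j : Fin n} (ha : a ≤ m) (hj : m ≤ (j : ℕ)) :
    blockWord n m a c j = decide ((j : ℕ) < m + c) := by
  simp only [blockWord, decide_eq_decide]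
  omega

namespace NOBDD

variable {n d : ℕ} (M : NOBDD n d)

def step (ν : Fin n → Bool) (S : Set (Fin d)) (j : Fin n) : Set (Fin d) :=
  {w | ∃ v ∈ S, w ∈ M.T j (ν (M.ord j)) v}

def reachPrefix (m : ℕ) (ν : Fin n → Bool) : Set (Fin d) :=
  ((List.finRange n).take m).foldl (M.step ν) {M.start}

lemma reach_eq_foldl_drop (m : ℕ) (ν : Fin n → Bool) :
    M.reach ν = ((List.finRange n).drop m).foldl (M.step ν) (M.reachPrefix m ν) := by
  rw [reachPrefix, ← List.foldl_append, List.take_append_drop]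
  rfl

lemma reachPrefix_congr {m : ℕ} {ν ν' : Fin n → Bool}
    (h : ∀ j : Fin n, (j : ℕ) < m → ν (M.ord j) = ν' (M.ord j)) :
    M.reachPrefix m ν = M.reachPrefix m ν' :=
  List.foldl_ext _ _ _ fun S j hj => by simp only [step, h j (List.lt_of_mem_take_finRange hj)]

lemma reach_eq_of_reachPrefix_eq {m : ℕ} {ν ν' : Fin n → Bool}
    (hpre : M.reachPrefix m ν = M.reachPrefix m ν')
    (hsuf : ∀ j : Fin n, m ≤ (j : ℕ) → ν (M.ord j) = ν' (M.ord j)) :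
    M.reach ν = M.reach ν' := by
  rw [M.reach_eq_foldl_drop m, M.reach_eq_foldl_drop m, hpre]
  exact List.foldl_ext _ _ _ fun S j hj => by
    simp only [step, hsuf j (List.le_of_mem_drop_finRange hj)]

lemma computes_eq_of_reach_eq {f : (Fin n → Bool) → Bool} (hM : M.computes f)
    {ν ν' : Fin n → Bool} (h : M.reach ν = M.reach ν') : f ν = f ν' := by
  rw [Bool.eq_iff_iff, ← hM, ← hM, accepts, accepts, h]

lemma reachPrefix_blockWord_injective {m : ℕ} (hn : n = m + m) (hM : M.computes (NotO n)) :
    Function.Injective fun a : Fin (m + 1) =>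
      M.reachPrefix m (blockWord n m a 0 ∘ M.ord.symm) := by
  intro a b hab
  have ha : (a : ℕ) ≤ m := Nat.lt_succ_iff.mp a.isLt
  have hb : (b : ℕ) ≤ m := Nat.lt_succ_iff.mp b.isLt
  have hprefix (x c : ℕ) : M.reachPrefix m (blockWord n m x c ∘ M.ord.symm) =
      M.reachPrefix m (blockWord n m x 0 ∘ M.ord.symm) :=
    M.reachPrefix_congr fun j hj => by simp [blockWord_of_lt hj]
  have hreach : M.reach (blockWord n m a (m - b) ∘ M.ord.symm) =
      M.reach (blockWord n m b (m - b) ∘ M.ord.symm) := by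
    refine M.reach_eq_of_reachPrefix_eq (m := m) ?_ fun j hj => ?_
    · rw [hprefix a, hprefix b]
      exact hab
    · simp [blockWord_of_ge ha hj, blockWord_of_ge hb hj]
  have := computes_eq_of_reach_eq M hM hreach
  rw [Bool.eq_iff_iff, notO_eq_true_iff, notO_eq_true_iff, countOnes_comp_perm,
    countOnes_comp_perm, countOnes_blockWord ha (by omega), countOnes_blockWord hb (by omega)]
    at this
  exact Fin.ext (by omega)

end NOBDD

/-- There are infinitely many `n` (in particular, all even `n`) such that any nondeterministic
OBDD computing `NotO_n` has width at least `⌊log₂ n⌋ - 1`. -/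
theorem notO_nondeterministic_lower_bound :
    ∀ n : ℕ, Even n →
      ∀ (d : ℕ) (M : NOBDD n d), M.computes (NotO n) → Nat.log 2 n - 1 ≤ d := by
  rintro n ⟨m, hn⟩ d M hM
  have hcard : m + 1 ≤ 2 ^ d := by
    simpa [Fintype.card_set] using
      Fintype.card_le_of_injective _ (M.reachPrefix_blockWord_injective hn hM)
  have hlog : Nat.log 2 n < d + 1 := Nat.log_lt_of_lt_pow' (by omega) (by rw [pow_succ]; omega)
  omega
end

section
/- For all integers n and k with 1 < k ≤ n/2, every deterministic OBDD computing MOD^k_n has width at least k, and every nondeterministic OBDD computing MOD^k_n has width at least k. -/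
namespace MODlb

lemma mem_take_finRange {n k : ℕ} {j : Fin n} :
    j ∈ (List.finRange n).take k ↔ (j:ℕ) < k := by
  simp only [List.mem_iff_getElem, List.getElem_take, List.length_take,
    List.length_finRange, List.getElem_finRange, lt_inf_iff]
  constructor
  · rintro ⟨m, ⟨hm1, hm2⟩, rfl⟩; exact hm1
  · intro h; exact ⟨j, ⟨h, j.2⟩, by simp⟩

lemma mem_drop_finRange {n k : ℕ} {j : Fin n} :
    j ∈ (List.finRange n).drop k ↔ k ≤ (j:ℕ) := by
  simp only [List.mem_iff_getElem, List.getElem_drop, List.length_drop,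
    List.length_finRange, List.getElem_finRange]
  constructor
  · rintro ⟨m, hm, rfl⟩; simp
  · intro h; refine ⟨(j:ℕ) - k, by omega, ?_⟩; ext; simp; omega

/-- The canonical input: among positions (in π-order) `0..k-1` exactly the first `i` are 1,
and among positions `k..n-1` exactly the first `r` are 1. -/
def gfun (k i r : ℕ) {n : ℕ} (j : Fin n) : Bool :=
  if (j:ℕ) < k then decide ((j:ℕ) < i) else decide ((j:ℕ) < k + r)

def wfun {n : ℕ} (ord : Equiv.Perm (Fin n)) (k i r : ℕ) : Fin n → Bool :=
  fun x => gfun k i r (ord.symm x)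

lemma wfun_ord {n : ℕ} (ord : Equiv.Perm (Fin n)) (k i r : ℕ) (j : Fin n) :
    wfun ord k i r (ord j) = gfun k i r j := by
  simp [wfun]

lemma countOnes_wfun {n : ℕ} (ord : Equiv.Perm (Fin n)) (k i r : ℕ)
    (hi : i ≤ k) (hr : k + r ≤ n) :
    countOnes (wfun ord k i r) = i + r := by
  have h1 : (Finset.univ.filter (fun x => wfun ord k i r x = true))
      = (Finset.univ.filter (fun j => gfun k i r j = true)).map
        (ord : Fin n ≃ Fin n).toEmbedding := by
    ext x
    simp only [Finset.mem_filter, Finset.mem_map, Equiv.coe_toEmbedding, Finset.mem_univ,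
      true_and]
    constructor
    · intro h; exact ⟨ord.symm x, h, by simp⟩
    · rintro ⟨j, hj, rfl⟩; simpa [wfun] using hj
  have h2 : ((Finset.univ.filter (fun j : Fin n => gfun k i r j = true)).card)
      = ((Finset.range n).filter (fun m => m < i ∨ (k ≤ m ∧ m < k + r))).card := by
    refine Finset.card_bij (fun j _ => (j : ℕ)) ?_ ?_ ?_
    · intro j hj
      simp only [Finset.mem_filter, Finset.mem_univ, true_and, gfun] at hj
      simp only [Finset.mem_filter, Finset.mem_range]
      refine ⟨j.2, ?_⟩
      by_cases h : (j:ℕ) < k <;> simp [h] at hj <;> omega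
    · intro a ha b hb h; exact Fin.ext h
    · intro m hm
      simp only [Finset.mem_filter, Finset.mem_range] at hm
      refine ⟨⟨m, hm.1⟩, ?_, rfl⟩
      simp only [Finset.mem_filter, Finset.mem_univ, true_and, gfun]
      rcases hm.2 with h | h
      · simp [show m < k by omega, h]
      · simp [show ¬ m < k by omega, h.2]
  have h3 : ((Finset.range n).filter (fun m => m < i ∨ (k ≤ m ∧ m < k + r)))
      = Finset.range i ∪ Finset.Ico k (k + r) := by
    ext m
    simp only [Finset.mem_filter, Finset.mem_range, Finset.mem_union, Finset.mem_Ico]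
    omega
  have h4 : Disjoint (Finset.range i) (Finset.Ico k (k + r)) := by
    rw [Finset.disjoint_left]
    intro m hm hm'
    simp only [Finset.mem_range] at hm
    simp only [Finset.mem_Ico] at hm'
    omega
  rw [countOnes, h1, Finset.card_map, h2, h3, Finset.card_union_of_disjoint h4,
    Finset.card_range, Nat.card_Ico]
  omega

lemma mod_cancel {k a b r : ℕ} (ha : a < k) (hb : b < k)
    (h1 : (a + r) % k = 0) (h2 : (b + r) % k = 0) : a = b := by
  have d1 : k ∣ a + r := Nat.dvd_of_mod_eq_zero h1
  have d2 : k ∣ b + r := Nat.dvd_of_mod_eq_zero h2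
  rcases le_total a b with h | h
  · have : k ∣ (b + r) - (a + r) := Nat.dvd_sub d2 d1
    have hs : (b + r) - (a + r) = b - a := by omega
    rw [hs] at this
    have := Nat.eq_zero_of_dvd_of_lt this (by omega)
    omega
  · have : k ∣ (a + r) - (b + r) := Nat.dvd_sub d1 d2
    have hs : (a + r) - (b + r) = a - b := by omega
    rw [hs] at this
    have := Nat.eq_zero_of_dvd_of_lt this (by omega)
    omega

lemma r_spec {k i : ℕ} (hi : i < k) (hk : 0 < k) :
    (i + (k - i) % k) % k = 0 := by
  rcases Nat.eq_zero_or_pos i with h | h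
  · subst h; simp [Nat.mod_self]
  · have h1 : (k - i) % k = k - i := Nat.mod_eq_of_lt (by omega)
    rw [h1, show i + (k - i) = k by omega, Nat.mod_self]

end MODlb

namespace MODlb

section Det
variable {n d : ℕ} (M : DOBDD n d) (k : ℕ)

/-- Node after reading the first `k` variables (in π-order) of `wfun _ k i r`. -/
def dpre (i : ℕ) : Fin d :=
  ((List.finRange n).take k).foldl
    (fun v j => M.T j (decide ((j:ℕ) < i)) v) M.start

/-- Node after reading the remaining variables, starting from `v`. -/
def dsuf (r : ℕ) (v : Fin d) : Fin d :=
  ((List.finRange n).drop k).foldl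
    (fun v j => M.T j (decide ((j:ℕ) < k + r)) v) v

lemma run_wfun (i r : ℕ) :
    M.run (wfun M.ord k i r) = dsuf M k r (dpre M k i) := by
  unfold DOBDD.run dsuf dpre
  conv_lhs => rw [← List.take_append_drop k (List.finRange n)]
  rw [List.foldl_append]
  have hpre : ((List.finRange n).take k).foldl
      (fun v j => M.T j (wfun M.ord k i r (M.ord j)) v) M.start
      = ((List.finRange n).take k).foldl
      (fun v j => M.T j (decide ((j:ℕ) < i)) v) M.start := by
    apply List.foldl_ext
    intro v j hj
    rw [mem_take_finRange] at hj
    rw [wfun_ord, gfun, if_pos hj]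
  rw [hpre]
  apply List.foldl_ext
  intro v j hj
  rw [mem_drop_finRange] at hj
  rw [wfun_ord, gfun, if_neg (by omega)]

end Det

section Nondet
variable {n d : ℕ} (M : NOBDD n d) (k : ℕ)

def nstep (b : Bool) (S : Set (Fin d)) (j : Fin n) : Set (Fin d) :=
  {w | ∃ v ∈ S, w ∈ M.T j b v}

def npre (i : ℕ) : Set (Fin d) :=
  ((List.finRange n).take k).foldl
    (fun S j => {w | ∃ v ∈ S, w ∈ M.T j (decide ((j:ℕ) < i)) v}) {M.start}

def nsuf (r : ℕ) (S : Set (Fin d)) : Set (Fin d) :=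
  ((List.finRange n).drop k).foldl
    (fun S j => {w | ∃ v ∈ S, w ∈ M.T j (decide ((j:ℕ) < k + r)) v}) S

lemma reach_wfun (i r : ℕ) :
    M.reach (wfun M.ord k i r) = nsuf M k r (npre M k i) := by
  unfold NOBDD.reach nsuf npre
  conv_lhs => rw [← List.take_append_drop k (List.finRange n)]
  rw [List.foldl_append]
  have hpre : ((List.finRange n).take k).foldl
      (fun S j => {w | ∃ v ∈ S, w ∈ M.T j (wfun M.ord k i r (M.ord j)) v}) {M.start}
      = ((List.finRange n).take k).foldl
      (fun S j => {w | ∃ v ∈ S, w ∈ M.T j (decide ((j:ℕ) < i)) v}) {M.start} := by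
    apply List.foldl_ext
    intro S j hj
    rw [mem_take_finRange] at hj
    rw [wfun_ord, gfun, if_pos hj]
  rw [hpre]
  apply List.foldl_ext
  intro S j hj
  rw [mem_drop_finRange] at hj
  rw [wfun_ord, gfun, if_neg (by omega)]

/-- Monotonicity of the reach fold. -/
lemma nfold_mono (T : Fin n → Fin d → Set (Fin d)) :
    ∀ (l : List (Fin n)) (S S' : Set (Fin d)), S ⊆ S' →
    l.foldl (fun S j => {w | ∃ v ∈ S, w ∈ T j v}) S
      ⊆ l.foldl (fun S j => {w | ∃ v ∈ S, w ∈ T j v}) S' := by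
  intro l
  induction l with
  | nil => intro S S' h; exact h
  | cons j l ih =>
      intro S S' h
      simp only [List.foldl_cons]
      apply ih
      intro w hw
      obtain ⟨v, hv, hw⟩ := hw
      exact ⟨v, h hv, hw⟩

/-- Path decomposition of the reach fold. -/
lemma nfold_mem (T : Fin n → Fin d → Set (Fin d)) :
    ∀ (l : List (Fin n)) (S : Set (Fin d)) (w : Fin d),
    w ∈ l.foldl (fun S j => {w | ∃ v ∈ S, w ∈ T j v}) S →
    ∃ u ∈ S, w ∈ l.foldl (fun S j => {w | ∃ v ∈ S, w ∈ T j v}) {u} := by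
  intro l
  induction l with
  | nil => intro S w hw; exact ⟨w, hw, rfl⟩
  | cons j l ih =>
      intro S w hw
      simp only [List.foldl_cons] at hw ⊢
      obtain ⟨x, hx, hw⟩ := ih _ _ hw
      obtain ⟨u, hu, hx⟩ := hx
      refine ⟨u, hu, ?_⟩
      have hsub : ({x} : Set (Fin d)) ⊆ {w | ∃ v ∈ ({u} : Set (Fin d)), w ∈ T j v} := by
        intro y hy
        rcases hy with rfl
        exact ⟨u, rfl, hx⟩
      exact nfold_mono T l _ _ hsub hw

end Nondet

end MODlb

open MODlb

/-- For all `n, k` with `1 < k ≤ n/2`, any deterministic OBDD and any nondeterministic OBDD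
computing `MOD^k_n` has width at least `k`. -/
theorem MOD_lower_bound (n k : ℕ) (h1 : 1 < k) (h2 : k ≤ n / 2) :
    (∀ (d : ℕ) (M : DOBDD n d), M.computes (MODf n k) → k ≤ d) ∧
    (∀ (d : ℕ) (M : NOBDD n d), M.computes (MODf n k) → k ≤ d) := by
  have hk0 : 0 < k := by omega
  have h2k : 2 * k ≤ n := by omega
  constructor
  · -- deterministic case
    intro d M hM
    have hMiff : ∀ ν, M.run ν ∈ M.Accept ↔ countOnes ν % k = 0 := by
      intro ν
      have := hM ν
      simpa [DOBDD.accepts, MODf, decide_eq_true_eq] using this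
    have key : Function.Injective (fun i : Fin k => dpre M k (i:ℕ)) := by
      intro i i' hpi
      simp only at hpi
      set r := (k - (i:ℕ)) % k with hrdef
      have hrk : r < k := Nat.mod_lt _ hk0
      have hmod : ((i:ℕ) + r) % k = 0 := r_spec i.2 hk0
      have hacc : M.run (wfun M.ord k (i:ℕ) r) ∈ M.Accept := by
        rw [hMiff, countOnes_wfun M.ord k _ r (le_of_lt i.2) (by omega), hmod]
      rw [run_wfun, hpi, ← run_wfun, hMiff,
        countOnes_wfun M.ord k _ r (le_of_lt i'.2) (by omega)] at hacc
      exact Fin.ext (mod_cancel i.2 i'.2 hmod hacc)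
    simpa using Fintype.card_le_of_injective _ key
  · -- nondeterministic case
    intro d M hM
    have hMiff : ∀ ν, (∃ v ∈ M.reach ν, v ∈ M.Accept) ↔ countOnes ν % k = 0 := by
      intro ν
      have := hM ν
      simpa [NOBDD.accepts, MODf, decide_eq_true_eq] using this
    have hex : ∀ i : Fin k, ∃ u, u ∈ npre M k (i:ℕ) ∧
        ∃ v ∈ nsuf M k ((k - (i:ℕ)) % k) {u}, v ∈ M.Accept := by
      intro i
      set r := (k - (i:ℕ)) % k with hrdef
      have hrk : r < k := Nat.mod_lt _ hk0
      have hmod : ((i:ℕ) + r) % k = 0 := r_spec i.2 hk0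
      have hacc : ∃ v ∈ M.reach (wfun M.ord k (i:ℕ) r), v ∈ M.Accept := by
        rw [hMiff, countOnes_wfun M.ord k _ r (le_of_lt i.2) (by omega)]
        exact hmod
      obtain ⟨v, hv, hvA⟩ := hacc
      rw [reach_wfun] at hv
      obtain ⟨u, hu, hv'⟩ := nfold_mem (fun j => M.T j (decide ((j:ℕ) < k + r)))
        ((List.finRange n).drop k) _ v hv
      exact ⟨u, hu, v, hv', hvA⟩
    choose uu hu1 hu2 using hex
    have key : Function.Injective uu := by
      intro i i' hpi
      set r := (k - (i:ℕ)) % k with hrdef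
      have hrk : r < k := Nat.mod_lt _ hk0
      have hmod : ((i:ℕ) + r) % k = 0 := r_spec i.2 hk0
      obtain ⟨v, hv, hvA⟩ := hu2 i
      have hsub : nsuf M k r {uu i} ⊆ nsuf M k r (npre M k (i':ℕ)) := by
        apply nfold_mono (fun j => M.T j (decide ((j:ℕ) < k + r)))
        intro y hy
        rcases hy with rfl
        rw [hpi]
        exact hu1 i'
      have hacc' : ∃ w ∈ M.reach (wfun M.ord k (i':ℕ) r), w ∈ M.Accept := by
        rw [reach_wfun]
        exact ⟨v, hsub hv, hvA⟩
      rw [hMiff, countOnes_wfun M.ord k _ r (le_of_lt i'.2) (by omega)] at hacc'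
      exact Fin.ext (mod_cancel i.2 i'.2 hmod hacc')
    simpa using Fintype.card_le_of_injective _ key
end

section
/- For all integers n and k with k even and 1 < k ≤ n, every deterministic OBDD computing the Boolean function NotO^k_n has width at least k/2 + 1. -/
/-!
Cut the variable order at a step `t` by which exactly `k/2` of the first `k` variables have been
read. For `m = 0, …, k/2`, the input with `m` ones among these early variables and `k/2 - m` ones
among the late ones is balanced, hence rejected. With at most `k/2` nodes, two of these inputs,
say for `m ≠ m'`, are in the same node after step `t`; then the input taking its early bits from
the `m'`-input and its late bits from the `m`-input ends in the same node as the `m`-input,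
although it has `k/2 + m' - m ≠ k/2` ones among the first `k` bits and must be accepted.
-/

open Finset

lemma List.val_lt_of_mem_take_finRange {n t : ℕ} {j : Fin n}
    (hj : j ∈ (List.finRange n).take t) : (j : ℕ) < t := by
  obtain ⟨i, hi, rfl⟩ := List.mem_take_iff_getElem.mp hj
  simp only [List.getElem_finRange, Fin.cast_mk]
  omega

lemma List.le_val_of_mem_drop_finRange {n t : ℕ} {j : Fin n}
    (hj : j ∈ (List.finRange n).drop t) : t ≤ (j : ℕ) := by
  obtain ⟨i, _, rfl⟩ := List.mem_drop_iff_getElem.mp hj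
  simp

lemma Nat.exists_eq_of_le_of_succ_le_add_one {f : ℕ → ℕ} (h0 : f 0 = 0)
    (hf : ∀ t, f (t + 1) ≤ f t + 1) {m : ℕ} : ∀ {N : ℕ}, m ≤ f N → ∃ t, f t = m
  | 0, hm => ⟨0, by omega⟩
  | N + 1, hm => by
    by_cases h : m ≤ f N
    · exact Nat.exists_eq_of_le_of_succ_le_add_one h0 hf h
    · exact ⟨N + 1, by have := hf N; omega⟩

lemma Finset.exists_card_filter_lt_eq {α : Type*} [DecidableEq α] (s : Finset α)
    {τ : α → ℕ} (hτ : Set.InjOn τ s) {m : ℕ} (hm : m ≤ #s) : ∃ t, #{i ∈ s | τ i < t} = m := by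
  refine Nat.exists_eq_of_le_of_succ_le_add_one (N := s.sup τ + 1) (by simp) (fun t => ?_) ?_
  · have hsplit : {i ∈ s | τ i < t + 1} ⊆ {i ∈ s | τ i < t} ∪ {i ∈ s | τ i = t} := by
      intro i hi
      simp only [mem_filter, mem_union] at hi ⊢
      exact (Nat.lt_succ_iff_lt_or_eq.mp hi.2).imp (⟨hi.1, ·⟩) (⟨hi.1, ·⟩)
    have hle : #{i ∈ s | τ i = t} ≤ 1 := card_le_one.mpr fun a ha b hb => by
      simp only [mem_filter] at ha hb
      exact hτ ha.1 hb.1 (ha.2.trans hb.2.symm)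
    calc _ ≤ #({i ∈ s | τ i < t} ∪ {i ∈ s | τ i = t}) := card_le_card hsplit
      _ ≤ #{i ∈ s | τ i < t} + 1 := (card_union_le _ _).trans (by omega)
  · rwa [filter_true_of_mem fun i hi => Nat.lt_succ_of_le (le_sup hi)]

namespace DOBDD

variable {n d : ℕ} (M : DOBDD n d)

def step (ν : Fin n → Bool) (v : Fin d) (j : Fin n) : Fin d :=
  M.T j (ν (M.ord j)) v

def stateAfter (t : ℕ) (ν : Fin n → Bool) : Fin d :=
  ((List.finRange n).take t).foldl (M.step ν) M.start

def splice (t : ℕ) (ν ν' : Fin n → Bool) : Fin n → Bool :=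
  fun i => if (M.ord.symm i : ℕ) < t then ν i else ν' i

lemma run_eq_foldl_drop (t : ℕ) (ν : Fin n → Bool) :
    M.run ν = ((List.finRange n).drop t).foldl (M.step ν) (M.stateAfter t ν) := by
  rw [stateAfter, ← List.foldl_append, List.take_append_drop]
  rfl

lemma stateAfter_splice (t : ℕ) (ν ν' : Fin n → Bool) :
    M.stateAfter t (M.splice t ν ν') = M.stateAfter t ν :=
  List.foldl_ext _ _ _ fun v j hj => by
    simp [step, splice, List.val_lt_of_mem_take_finRange hj]

lemma run_splice {t : ℕ} {ν ν' : Fin n → Bool} (h : M.stateAfter t ν = M.stateAfter t ν') :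
    M.run (M.splice t ν ν') = M.run ν' := by
  rw [run_eq_foldl_drop _ t, run_eq_foldl_drop _ t, stateAfter_splice, h]
  exact List.foldl_ext _ _ _ fun v j hj => by
    simp [step, splice, (List.le_val_of_mem_drop_finRange hj).not_gt]

lemma computes.eq_of_run_eq {M : DOBDD n d} {f : (Fin n → Bool) → Bool} (hM : M.computes f)
    {ν ν' : Fin n → Bool} (h : M.run ν = M.run ν') : f ν = f ν' := by
  rw [Bool.eq_iff_iff, ← hM, ← hM, accepts, accepts, h]

theorem card_le_of_splice_ne {f : (Fin n → Bool) → Bool} (hM : M.computes f) {ι : Type*}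
    [Fintype ι] (t : ℕ) (x : ι → Fin n → Bool)
    (hx : ∀ i j, i ≠ j → f (M.splice t (x i) (x j)) ≠ f (x j)) : Fintype.card ι ≤ d := by
  by_contra! hd
  obtain ⟨i, j, hij, hstate⟩ :=
    Fintype.exists_ne_map_eq_of_card_lt (fun i => M.stateAfter t (x i)) (by simpa using hd)
  exact hx i j hij (hM.eq_of_run_eq (M.run_splice hstate))

end DOBDD

def boolIndicator {n : ℕ} (S : Finset (Fin n)) : Fin n → Bool :=
  fun i => decide (i ∈ S)

lemma DOBDD.splice_boolIndicator_union {n d : ℕ} (M : DOBDD n d) {t : ℕ}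
    {A A' B B' : Finset (Fin n)} (hA : ∀ i ∈ A ∪ A', (M.ord.symm i : ℕ) < t)
    (hB : ∀ i ∈ B ∪ B', t ≤ (M.ord.symm i : ℕ)) :
    M.splice t (boolIndicator (A ∪ B)) (boolIndicator (A' ∪ B')) =
      boolIndicator (A ∪ B') := by
  funext i
  have hA := hA i
  have hB := hB i
  by_cases hi : (M.ord.symm i : ℕ) < t <;>
    simp only [splice, boolIndicator, hi, mem_union, if_true, if_false] at hA hB ⊢ <;>
    grind

section FirstBits

variable {n k : ℕ} {S : Finset (Fin n)}

lemma countOnesFirst_boolIndicator (hS : ∀ i ∈ S, (i : ℕ) < k) :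
    countOnesFirst k (boolIndicator S) = #S := by
  rw [countOnesFirst]
  congr 1
  ext i
  simpa [boolIndicator] using hS i

lemma countZerosFirst_boolIndicator (hkn : k ≤ n) (hS : ∀ i ∈ S, (i : ℕ) < k) :
    countZerosFirst k (boolIndicator S) = k - #S := by
  have hzeros : ({i | (i : ℕ) < k ∧ boolIndicator S i = false} : Finset (Fin n)) =
      ({i | (i : ℕ) < k} : Finset (Fin n)) \ S := by
    ext i
    simp [boolIndicator]
  rw [countZerosFirst, hzeros, card_sdiff_of_subset fun i hi => by simpa using hS i hi,
    Fin.card_filter_val_lt, min_eq_right hkn]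

lemma notOk_boolIndicator (hk : Even k) (hkn : k ≤ n) (hS : ∀ i ∈ S, (i : ℕ) < k) :
    NotOk n k (boolIndicator S) = !decide (#S = k / 2) := by
  rw [NotOk, countZerosFirst_boolIndicator hkn hS, countOnesFirst_boolIndicator hS]
  obtain ⟨r, rfl⟩ := hk
  congr 1
  exact decide_eq_decide.mpr (by omega)

end FirstBits

lemma DOBDD.exists_notOk_fooling {n d k : ℕ} (M : DOBDD n d) (hk : Even k) (hkn : k ≤ n)
    {t : ℕ}
    (ht : #{i ∈ ({i | (i : ℕ) < k} : Finset (Fin n)) | (M.ord.symm i : ℕ) < t} = k / 2) :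
    ∃ x : Fin (k / 2 + 1) → Fin n → Bool,
      ∀ i j, i ≠ j → NotOk n k (M.splice t (x i) (x j)) ≠ NotOk n k (x j) := by
  set K := k / 2
  set P : Finset (Fin n) := {i | (i : ℕ) < k}
  set R := {i ∈ P | (M.ord.symm i : ℕ) < t}
  set R' := {i ∈ P | ¬ (M.ord.symm i : ℕ) < t}
  have hR' : #R' = K := by
    have hP : #P = k := by rw [Fin.card_filter_val_lt, min_eq_right hkn]
    have : #R + #R' = #P := card_filter_add_card_filter_not _
    obtain ⟨r, rfl⟩ := hk
    omega
  choose A hAR hA using fun m : Fin (K + 1) => exists_subset_card_eq (s := R) (n := m) (by omega)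
  choose B hBR' hB using fun m : Fin (K + 1) =>
    exists_subset_card_eq (s := R') (n := K - m) (by omega)
  have hsplice : ∀ i j, M.splice t (boolIndicator (A i ∪ B i)) (boolIndicator (A j ∪ B j)) =
      boolIndicator (A i ∪ B j) := fun i j =>
    M.splice_boolIndicator_union
      (fun x hx => (mem_filter.mp (union_subset (hAR i) (hAR j) hx)).2)
      (fun x hx => not_lt.mp (mem_filter.mp (union_subset (hBR' i) (hBR' j) hx)).2)
  have hnotOk : ∀ i j, NotOk n k (boolIndicator (A i ∪ B j)) = !decide (i = j) := by
    intro i j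
    have hsub : ∀ x ∈ A i ∪ B j, (x : ℕ) < k := fun x hx => by
      simpa [P] using union_subset ((hAR i).trans (filter_subset _ P))
        ((hBR' j).trans (filter_subset _ P)) hx
    have hcard : #(A i ∪ B j) = i + (K - j) := by
      rw [card_union_of_disjoint ((disjoint_filter_filter_not P P _).mono (hAR i) (hBR' j)),
        hA, hB]
    rw [notOk_boolIndicator hk hkn hsub, hcard]
    congr 1
    exact decide_eq_decide.mpr (by rw [Fin.ext_iff]; omega)
  refine ⟨fun m => boolIndicator (A m ∪ B m), fun i j hij => ?_⟩
  rw [hsplice, hnotOk, hnotOk]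
  simp [hij]

theorem notOk_deterministic_lower_bound_general (n k : ℕ) (hk : Even k) (h2 : k ≤ n) :
    ∀ (d : ℕ) (M : DOBDD n d), M.computes (NotOk n k) → k / 2 + 1 ≤ d := by
  intro d M hM
  obtain ⟨t, ht⟩ := exists_card_filter_lt_eq {i : Fin n | (i : ℕ) < k}
    (τ := fun i => (M.ord.symm i : ℕ)) (fun i _ j _ h => M.ord.symm.injective (Fin.ext h))
    (m := k / 2) (by rw [Fin.card_filter_val_lt, min_eq_right h2]; omega)
  obtain ⟨x, hx⟩ := M.exists_notOk_fooling hk h2 ht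
  simpa using M.card_le_of_splice_ne hM t x hx

/-- For all `n, k` with `k` even and `1 < k ≤ n`, any deterministic OBDD computing
`NotO^k_n` has width at least `k/2 + 1`. -/
theorem notOk_deterministic_lower_bound (n k : ℕ) (hk : Even k) (h1 : 1 < k) (h2 : k ≤ n) :
    ∀ (d : ℕ) (M : DOBDD n d), M.computes (NotOk n k) → k / 2 + 1 ≤ d :=
  notOk_deterministic_lower_bound_general n k hk h2
end

section
/- There exists a constant C > 0 such that for all integers n and k with k even and 2 < k ≤ n, there exists a nondeterministic OBDD of width at most C·(log₂ k)²·log₂ log₂ k computing the Boolean function NotO^k_n. -/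
/-! The NOBDD guesses, at its first bit, a modulus `2 ≤ m ≤ M := 2 (log₂ k + 1)` and then counts
the ones among the first `k` bits modulo `m`, accepting iff the count differs from `k / 2`
modulo `m`. This is correct because two distinct numbers `a, b ≤ k` differ modulo some `m ≤ M`:
otherwise `lcm(1, …, M)` would divide `a - b`, yet `lcm(1, …, M) ≥ C(M, M/2) ≥ 2 ^ (M/2) > k`.
Its states are pairs (modulus, residue), so its width is `(M + 1)² = O(log² k)`. -/

namespace Nat

theorem two_pow_le_centralBinom (n : ℕ) : 2 ^ n ≤ centralBinom n := by
  induction n with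
  | zero => simp
  | succ n ih =>
    have h := succ_mul_centralBinom_succ n
    refine Nat.le_of_mul_le_mul_left ?_ n.succ_pos
    rw [h, pow_succ]
    nlinarith

theorem lt_lcmUpto_two_mul_succ_log (k : ℕ) : k < lcmUpto (2 * (log 2 k + 1)) :=
  calc k < 2 ^ (log 2 k + 1) := lt_pow_succ_log_self one_lt_two k
    _ ≤ centralBinom (log 2 k + 1) := two_pow_le_centralBinom _
    _ ≤ lcmUpto (2 * (log 2 k + 1)) :=
      le_of_dvd (lcmUpto_pos _) (Chebyshev.choose_dvd_lcmUpto (by omega))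

theorem modEq_lcmUpto_of_forall {a b M : ℕ} (h : ∀ m ∈ Finset.Icc 1 M, a ≡ b [MOD m]) :
    a ≡ b [MOD lcmUpto M] :=
  modEq_iff_dvd.2 <| Int.natCast_dvd.2 <| Finset.lcm_dvd fun m hm =>
    Int.natCast_dvd.1 (modEq_iff_dvd.1 (h m hm))

theorem exists_mod_ne_of_ne {a b k : ℕ} (ha : a ≤ k) (hb : b ≤ k) (hab : a ≠ b) :
    ∃ m, 2 ≤ m ∧ m ≤ 2 * (log 2 k + 1) ∧ a % m ≠ b % m := by
  by_contra! h
  refine hab (ModEq.eq_of_lt_of_lt (modEq_lcmUpto_of_forall fun m hm => ?_)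
    (ha.trans_lt (lt_lcmUpto_two_mul_succ_log k)) (hb.trans_lt (lt_lcmUpto_two_mul_succ_log k)))
  obtain ⟨h1, hM⟩ := Finset.mem_Icc.1 hm
  obtain rfl | h2 := h1.eq_or_lt
  · exact modEq_one
  · exact h m h2 hM

end Nat

def relReach {σ ι : Type*} (R : ι → σ → σ → Prop) (l : List ι) (S : Set σ) : Set σ :=
  l.foldl (fun S j => {t | ∃ s ∈ S, R j s t}) S

section relReach

variable {σ τ ι : Type*}

theorem relReach_map {κ : Type*} (R : κ → σ → σ → Prop) (f : ι → κ) (l : List ι) (S : Set σ) :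
    relReach (fun j => R (f j)) l S = relReach R (l.map f) S := by
  simp only [relReach, List.foldl_map]

theorem relReach_concat (R : ι → σ → σ → Prop) (l : List ι) (j : ι) (S : Set σ) :
    relReach R (l ++ [j]) S = {t | ∃ s ∈ relReach R l S, R j s t} :=
  List.foldl_concat ..

theorem relReach_preimage_equiv (e : σ ≃ τ) (R : ι → σ → σ → Prop) (l : List ι) (S : Set σ) :
    relReach (fun j v w => R j (e.symm v) (e.symm w)) l (e.symm ⁻¹' S) =
      e.symm ⁻¹' relReach R l S := by
  induction l generalizing S with
  | nil => rfl
  | cons j l ih =>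
    have hstep : {w | ∃ v ∈ e.symm ⁻¹' S, R j (e.symm v) (e.symm w)} =
        e.symm ⁻¹' {t | ∃ s ∈ S, R j s t} := by
      ext w
      exact ⟨fun ⟨v, hv, hw⟩ => ⟨e.symm v, hv, hw⟩,
        fun ⟨s, hs, hw⟩ => ⟨e s, by simpa using hs, by simpa using hw⟩⟩
    exact (congrArg (relReach _ l) hstep).trans (ih _)

end relReach

namespace NOBDD

variable {σ : Type*} {n d : ℕ}

theorem reach_eq_relReach (M : NOBDD n d) (ν : Fin n → Bool) :
    M.reach ν = relReach (fun j v w => w ∈ M.T j (ν (M.ord j)) v) (List.finRange n) {M.start} :=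
  rfl

def ofRel (e : σ ≃ Fin d) (ord : Equiv.Perm (Fin n)) (R : Fin n → Bool → σ → σ → Prop)
    (s₀ : σ) (acc : σ → Prop) [DecidablePred acc] : NOBDD n d where
  ord := ord
  T j b v := {w | R j b (e.symm v) (e.symm w)}
  start := e s₀
  Accept := Finset.univ.filter fun v => acc (e.symm v)

theorem accepts_ofRel_iff (e : σ ≃ Fin d) (ord : Equiv.Perm (Fin n))
    (R : Fin n → Bool → σ → σ → Prop) (s₀ : σ) (acc : σ → Prop) [DecidablePred acc]
    (ν : Fin n → Bool) :
    (ofRel e ord R s₀ acc).accepts ν ↔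
      ∃ t ∈ relReach (fun j => R j (ν (ord j))) (List.finRange n) {s₀}, acc t := by
  have hstart : ({e s₀} : Set (Fin d)) = e.symm ⁻¹' {s₀} := by
    ext v; simp [Equiv.symm_apply_eq]
  rw [accepts, reach_eq_relReach]
  simp only [ofRel, Set.mem_ofPred_eq]
  rw [hstart, relReach_preimage_equiv e (fun j => R j (ν (ord j)))]
  refine ⟨fun ⟨v, hv, hacc⟩ => ⟨e.symm v, hv, by simpa using hacc⟩,
    fun ⟨t, ht, hacc⟩ => ⟨e t, by simpa using ht, by simpa using hacc⟩⟩

end NOBDD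

section ResidueCounter

variable (M : ℕ)

/-- A state `(m, r)` holds a modulus `m`, still `0` before the first step, and a residue
`r < m`. The first step guesses `m ∈ [2, M]`; then `r` counts the steps with `b = true` mod `m`. -/
def residueStep (b : Bool) (s t : Fin (M + 1) × Fin (M + 1)) : Prop :=
  2 ≤ (t.1 : ℕ) ∧ (s.1 = 0 ∨ t.1 = s.1) ∧ (t.2 : ℕ) = (s.2 + b.toNat) % t.1

def residueStates (c : ℕ) : Set (Fin (M + 1) × Fin (M + 1)) :=
  {t | 2 ≤ (t.1 : ℕ) ∧ (t.2 : ℕ) = c % t.1}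

theorem residueStep_image_zero (b : Bool) :
    {t | ∃ s ∈ ({0} : Set (Fin (M + 1) × Fin (M + 1))), residueStep M b s t} =
      residueStates M b.toNat := by
  ext t
  simp [residueStep, residueStates]

theorem residueStep_image_residueStates (c : ℕ) (b : Bool) :
    {t | ∃ s ∈ residueStates M c, residueStep M b s t} = residueStates M (c + b.toNat) := by
  ext t
  simp only [residueStep, residueStates, Set.mem_ofPred_eq]
  constructor
  · rintro ⟨s, ⟨hs, hsc⟩, ht, hst | hst, htb⟩
    · exact absurd hs (by simp [hst])
    · rw [hst] at ht htb ⊢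
      rw [htb, hsc, Nat.mod_add_mod]
      exact ⟨ht, rfl⟩
  · rintro ⟨ht, htc⟩
    have hlt : c % t.1 < M + 1 := (Nat.mod_lt _ (by omega)).trans t.1.isLt
    refine ⟨(t.1, ⟨c % t.1, hlt⟩), ⟨ht, rfl⟩, ht, Or.inr rfl, ?_⟩
    simp [htc, Nat.add_mod]

theorem relReach_residueStep {bits : List Bool} (hbits : bits ≠ []) :
    relReach (residueStep M) bits {0} = residueStates M (bits.map Bool.toNat).sum := by
  induction bits using List.reverseRecOn with
  | nil => exact absurd rfl hbits
  | append_singleton bits b ih =>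
    rw [relReach_concat]
    rcases eq_or_ne bits [] with rfl | hne
    · exact (residueStep_image_zero M b).trans (by simp)
    · rw [ih hne, residueStep_image_residueStates]
      simp

theorem exists_mem_residueStates_iff (c r : ℕ) :
    (∃ t ∈ residueStates M c, (t.2 : ℕ) ≠ r % t.1) ↔ ∃ m, 2 ≤ m ∧ m ≤ M ∧ c % m ≠ r % m := by
  constructor
  · rintro ⟨t, ⟨ht, htc⟩, hne⟩
    exact ⟨t.1, ht, Nat.lt_succ_iff.1 t.1.isLt, htc ▸ hne⟩
  · rintro ⟨m, hm, hmM, hne⟩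
    have hlt : c % m < M + 1 := by
      have := Nat.mod_lt c (show 0 < m by omega)
      omega
    exact ⟨(⟨m, by omega⟩, ⟨c % m, hlt⟩), ⟨hm, rfl⟩, hne⟩

end ResidueCounter

section NotOk

variable {n k : ℕ}

theorem countOnesFirst_eq_sum (ν : Fin n → Bool) :
    countOnesFirst k ν =
      ((List.finRange n).map fun j : Fin n => (decide ((j : ℕ) < k) && ν j).toNat).sum := by
  rw [countOnesFirst, Finset.card_filter, Fin.sum_univ_def]
  congr 2
  ext j
  by_cases hj : (j : ℕ) < k <;> cases ν j <;> simp [hj]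

theorem countZerosFirst_add_countOnesFirst (hkn : k ≤ n) (ν : Fin n → Bool) :
    countZerosFirst k ν + countOnesFirst k ν = k := by
  have hsplit := Finset.card_filter_add_card_filter_not
    (s := Finset.univ.filter fun i : Fin n => (i : ℕ) < k) (fun i => ν i = false)
  simp only [Finset.filter_filter, Bool.not_eq_false, Fin.card_filter_val_lt] at hsplit
  rw [countZerosFirst, countOnesFirst, hsplit]
  omega

theorem notOk_eq_true_iff (hk : Even k) (hkn : k ≤ n) (ν : Fin n → Bool) :
    NotOk n k ν = true ↔ countOnesFirst k ν ≠ k / 2 := by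
  have := countZerosFirst_add_countOnesFirst hkn ν
  have := Nat.even_iff.1 hk
  simp only [NotOk, Bool.not_eq_true', decide_eq_false_iff_not]
  omega

def notOkNOBDD (n k M : ℕ) : NOBDD n ((M + 1) * (M + 1)) :=
  NOBDD.ofRel finProdFinEquiv (Equiv.refl _)
    (fun j b => residueStep M (decide ((j : ℕ) < k) && b)) 0 fun t => (t.2 : ℕ) ≠ k / 2 % t.1

theorem notOkNOBDD_accepts_iff (M : ℕ) (hn : 0 < n) (ν : Fin n → Bool) :
    (notOkNOBDD n k M).accepts ν ↔ ∃ m, 2 ≤ m ∧ m ≤ M ∧ countOnesFirst k ν % m ≠ k / 2 % m := by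
  have hbits : (List.finRange n).map (fun j : Fin n => decide ((j : ℕ) < k) && ν j) ≠ [] := by
    simpa using hn.ne'
  simp only [notOkNOBDD, NOBDD.accepts_ofRel_iff, Equiv.refl_apply]
  rw [← exists_mem_residueStates_iff, relReach_map (residueStep M), relReach_residueStep M hbits,
    List.map_map, countOnesFirst_eq_sum]
  rfl

theorem notOkNOBDD_computes (hk : Even k) (hk0 : 0 < k) (hkn : k ≤ n) :
    (notOkNOBDD n k (2 * (Nat.log 2 k + 1))).computes (NotOk n k) := by
  intro ν
  have hones : countOnesFirst k ν ≤ k := by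
    have := countZerosFirst_add_countOnesFirst hkn ν
    omega
  rw [notOkNOBDD_accepts_iff _ (hk0.trans_le hkn), notOk_eq_true_iff hk hkn]
  constructor
  · rintro ⟨m, -, -, hm⟩ h
    exact hm (by rw [h])
  · exact Nat.exists_mod_ne_of_ne hones (Nat.div_le_self k 2)

end NotOk

theorem mul_self_two_mul_succ_add_one_le {L : ℕ} (hL : 2 ≤ L) :
    (2 * (L + 1) + 1) * (2 * (L + 1) + 1) ≤ 16 * L ^ 2 * Nat.log 2 L := by
  have hlog : 1 ≤ Nat.log 2 L := Nat.log_pos one_lt_two hL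
  calc (2 * (L + 1) + 1) * (2 * (L + 1) + 1) ≤ 16 * L ^ 2 * 1 := by nlinarith
    _ ≤ 16 * L ^ 2 * Nat.log 2 L := Nat.mul_le_mul_left _ hlog

/-- There is a constant `C > 0` such that for all `n, k` with `k` even and `2 < k ≤ n`,
there is a nondeterministic OBDD of width at most `C·(log₂ k)²·log₂ log₂ k` computing
`NotO^k_n`. -/
theorem notOk_nondeterministic_upper_bound :
    ∃ C : ℕ, 0 < C ∧
      ∀ n k : ℕ, Even k → 2 < k → k ≤ n →
        ∃ d : ℕ, d ≤ C * (Nat.log 2 k) ^ 2 * Nat.log 2 (Nat.log 2 k) ∧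
          ∃ M : NOBDD n d, M.computes (NotOk n k) := by
  refine ⟨16, by norm_num, fun n k hk hk2 hkn => ?_⟩
  have hk4 : 4 ≤ k := by
    obtain ⟨r, rfl⟩ := hk
    omega
  have hlog : 2 ≤ Nat.log 2 k := Nat.le_log_of_pow_le one_lt_two hk4
  exact ⟨_, mul_self_two_mul_succ_add_one_le hlog, _, notOkNOBDD_computes hk (by omega) hkn⟩
end
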